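/- arXiv:2303.18021 — 7 statements merged into one kernel-verified Lean document; each statement's English description precedes it below -/
import Mathlib

section
/- Let ε_max = min(θ_max, φ_max). If v ∈ V_c (i.e., v1^2+v2^2+(v3+g)^2 ≤ T_max^2, v1^2+v2^2 ≤ (v3+g)^2 tan^2(ε_max), v3 ≥ -g), then the feedback map β_ψ(v) = (T, φ, θ) with T = sqrt(v1^2+v2^2+(v3+g)^2), φ = arcsin((v1 sinψ - v2 cosψ)/T), θ = arctan((v1 cosψ + v2 sinψ)/(v3+g)) satisfies 0 ≤ T ≤ T_max, |φ| ≤ φ_max, and |θ| ≤ θ_max (assuming v3 + g > 0 so β_ψ is well-defined). In other words, V_c ⊆ V = { v : β_ψ(v) ∈ U }. -/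
set_option maxHeartbeats 1000000


open Real

/-- `V_c ⊆ V`: if `v ∈ V_c` (with `ε_max = min(θ_max, φ_max)`) and `v₃ + g > 0`,
then the flatness-based input `β_ψ(v) = (T, φ, θ)` satisfies the original input
constraints `0 ≤ T ≤ T_max`, `|φ| ≤ φ_max`, `|θ| ≤ θ_max`. -/
theorem stmt3 (g Tmax θmax φmax ψ v1 v2 v3 : ℝ)
    (hg : 0 < g) (hT : 0 < Tmax)
    (hθ : θmax ∈ Set.Ioo 0 (Real.pi / 2)) (hφ : φmax ∈ Set.Ioo 0 (Real.pi / 2))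
    (hv3 : 0 < v3 + g)
    (hVc1 : v1 ^ 2 + v2 ^ 2 + (v3 + g) ^ 2 ≤ Tmax ^ 2)
    (hVc2 : v1 ^ 2 + v2 ^ 2 ≤ (v3 + g) ^ 2 * Real.tan (min θmax φmax) ^ 2)
    (hVc3 : -g ≤ v3) :
    (0 ≤ Real.sqrt (v1 ^ 2 + v2 ^ 2 + (v3 + g) ^ 2) ∧
      Real.sqrt (v1 ^ 2 + v2 ^ 2 + (v3 + g) ^ 2) ≤ Tmax) ∧
    |Real.arcsin ((v1 * Real.sin ψ - v2 * Real.cos ψ) /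
        Real.sqrt (v1 ^ 2 + v2 ^ 2 + (v3 + g) ^ 2))| ≤ φmax ∧
    |Real.arctan ((v1 * Real.cos ψ + v2 * Real.sin ψ) / (v3 + g))| ≤ θmax := by
  obtain ⟨hθ1, hθ2⟩ := hθ
  obtain ⟨hφ1, hφ2⟩ := hφ
  have hπ := Real.pi_pos
  set ε := min θmax φmax with hε
  have hε0 : 0 < ε := lt_min hθ1 hφ1
  have hεlt : ε < Real.pi / 2 := lt_of_le_of_lt (min_le_left _ _) hθ2
  have hεθ : ε ≤ θmax := min_le_left _ _
  have hεφ : ε ≤ φmax := min_le_right _ _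
  have hcosε : 0 < Real.cos ε := Real.cos_pos_of_mem_Ioo ⟨by linarith, hεlt⟩
  have hsinε : 0 < Real.sin ε := Real.sin_pos_of_pos_of_lt_pi hε0 (by linarith)
  have htanε : Real.tan ε = Real.sin ε / Real.cos ε := Real.tan_eq_sin_div_cos ε
  have hpyth : Real.sin ε ^ 2 + Real.cos ε ^ 2 = 1 := Real.sin_sq_add_cos_sq ε
  set S := v1 ^ 2 + v2 ^ 2 + (v3 + g) ^ 2 with hS
  have hSpos : 0 < S := by positivity
  have hsqrtS : 0 < Real.sqrt S := Real.sqrt_pos.mpr hSpos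
  have hsqS : Real.sqrt S ^ 2 = S := Real.sq_sqrt hSpos.le
  have hTb : Real.sqrt S ≤ Tmax := by
    calc Real.sqrt S ≤ Real.sqrt (Tmax ^ 2) := Real.sqrt_le_sqrt hVc1
    _ = Tmax := by rw [Real.sqrt_sq hT.le]
  refine ⟨⟨Real.sqrt_nonneg _, hTb⟩, ?_, ?_⟩
  · -- roll bound
    set x := (v1 * Real.sin ψ - v2 * Real.cos ψ) / Real.sqrt S with hx
    have hnum : (v1 * Real.sin ψ - v2 * Real.cos ψ) ^ 2 ≤ v1 ^ 2 + v2 ^ 2 := by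
      nlinarith [Real.sin_sq_add_cos_sq ψ, sq_nonneg (v1 * Real.cos ψ + v2 * Real.sin ψ)]
    have h1 : (v1 ^ 2 + v2 ^ 2) * Real.cos ε ^ 2 ≤ (v3 + g) ^ 2 * Real.sin ε ^ 2 := by
      have h := hVc2
      rw [htanε, div_pow, mul_div_assoc'] at h
      have := (le_div_iff₀ (by positivity : (0:ℝ) < Real.cos ε ^ 2)).mp h
      linarith
    have hkey : (v1 * Real.sin ψ - v2 * Real.cos ψ) ^ 2 ≤ S * Real.sin ε ^ 2 := by
      nlinarith [sq_nonneg (Real.sin ε), hnum]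
    have hsinφ : Real.sin ε ≤ Real.sin φmax :=
      Real.sin_le_sin_of_le_of_le_pi_div_two (by linarith) hφ2.le hεφ
    have hsinφpos : 0 < Real.sin φmax := Real.sin_pos_of_pos_of_lt_pi hφ1 (by linarith)
    have hx2 : x ^ 2 ≤ Real.sin φmax ^ 2 := by
      rw [hx, div_pow, hsqS, div_le_iff₀ hSpos]
      have hsinsq : Real.sin ε ^ 2 ≤ Real.sin φmax ^ 2 := by nlinarith
      calc (v1 * Real.sin ψ - v2 * Real.cos ψ) ^ 2 ≤ S * Real.sin ε ^ 2 := hkey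
      _ = Real.sin ε ^ 2 * S := mul_comm _ _
      _ ≤ Real.sin φmax ^ 2 * S := mul_le_mul_of_nonneg_right hsinsq hSpos.le
    have hxabs : |x| ≤ Real.sin φmax := by
      have : |x| ^ 2 ≤ Real.sin φmax ^ 2 := by rwa [sq_abs]
      nlinarith [abs_nonneg x]
    have h1' : Real.arcsin x ≤ φmax := by
      have := Real.monotone_arcsin (abs_le.mp hxabs).2
      rwa [Real.arcsin_sin (by linarith) (by linarith)] at this
    have h2' : -φmax ≤ Real.arcsin x := by
      have h := Real.monotone_arcsin (show Real.sin (-φmax) ≤ x by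
        rw [Real.sin_neg]; linarith [(abs_le.mp hxabs).1])
      rwa [Real.arcsin_sin (by linarith) (by linarith)] at h
    exact abs_le.mpr ⟨h2', h1'⟩
  · -- pitch bound
    set y := (v1 * Real.cos ψ + v2 * Real.sin ψ) / (v3 + g) with hy
    have htanθ : 0 < Real.tan θmax := Real.tan_pos_of_pos_of_lt_pi_div_two hθ1 hθ2
    have htanmono : Real.tan ε ≤ Real.tan θmax := by
      rcases eq_or_lt_of_le hεθ with h | h
      · rw [h]
      · exact (Real.tan_lt_tan_of_nonneg_of_lt_pi_div_two hε0.le hθ2 h).le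
    have htanε0 : 0 < Real.tan ε := Real.tan_pos_of_pos_of_lt_pi_div_two hε0 hεlt
    have hnum : (v1 * Real.cos ψ + v2 * Real.sin ψ) ^ 2 ≤ v1 ^ 2 + v2 ^ 2 := by
      nlinarith [Real.sin_sq_add_cos_sq ψ, sq_nonneg (v1 * Real.sin ψ - v2 * Real.cos ψ)]
    have hy2 : y ^ 2 ≤ Real.tan θmax ^ 2 := by
      rw [hy, div_pow, div_le_iff₀ (by positivity)]
      calc (v1 * Real.cos ψ + v2 * Real.sin ψ) ^ 2 ≤ (v3 + g) ^ 2 * Real.tan ε ^ 2 :=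
        le_trans hnum hVc2
      _ = Real.tan ε ^ 2 * (v3 + g) ^ 2 := mul_comm _ _
      _ ≤ Real.tan θmax ^ 2 * (v3 + g) ^ 2 := by
          have : Real.tan ε ^ 2 ≤ Real.tan θmax ^ 2 := by nlinarith
          exact mul_le_mul_of_nonneg_right this (by positivity)
    have hyabs : |y| ≤ Real.tan θmax := by
      have : |y| ^ 2 ≤ Real.tan θmax ^ 2 := by rwa [sq_abs]
      nlinarith [abs_nonneg y]
    have h1' : Real.arctan y ≤ θmax := by
      have := Real.arctan_strictMono.monotone (abs_le.mp hyabs).2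
      rwa [Real.arctan_tan (by linarith) hθ2] at this
    have h2' : -θmax ≤ Real.arctan y := by
      have h := Real.arctan_strictMono.monotone (show Real.tan (-θmax) ≤ y by
        rw [Real.tan_neg]; linarith [(abs_le.mp hyabs).1])
      rwa [Real.arctan_tan (by linarith) (by linarith)] at h
    exact abs_le.mpr ⟨h2', h1'⟩
end

section
/- For any v = (v1,v2,v3) ∈ R^3 with v3 + g > 0, the map β_ψ followed by h_ψ is the identity: h_ψ(β_ψ(v)) = v. That is, with T = sqrt(v1^2+v2^2+(v3+g)^2), φ = arcsin((v1 sinψ - v2 cosψ)/T), θ = arctan((v1 cosψ + v2 sinψ)/(v3+g)), one has T(cosφ sinθ cosψ + sinφ sinψ) = v1, T(cosφ sinθ sinψ - sinφ cosψ) = v2, and T cosφ cosθ - g = v3. -/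
/-!
Rotating the horizontal part of `(v₁, v₂, v₃ + g)` by `-ψ` gives `(a, b, c)` with the same norm `T`,
`a = v₁ cos ψ + v₂ sin ψ`, `b = v₁ sin ψ - v₂ cos ψ`, `c = v₃ + g > 0`. Then `φ = arcsin (b / T)` and
`θ = arctan (a / c)` are spherical coordinates of `(a, b, c)`: `T sin φ = b`, `T cos φ = √(a² + c²)`,
and `√(a² + c²) (sin θ, cos θ) = (a, c)`. Undoing the rotation recovers `v`.
-/

open Real

namespace Real

theorem sqrt_mul_sin_arcsin_div {b q : ℝ} (hq : 0 ≤ q) :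
    √(b ^ 2 + q) * sin (arcsin (b / √(b ^ 2 + q))) = b := by
  have hb : |b| ≤ √(b ^ 2 + q) := abs_le_sqrt (by linarith)
  have hbound : |b / √(b ^ 2 + q)| ≤ 1 := by
    rw [abs_div, abs_of_nonneg (sqrt_nonneg _)]
    exact div_le_one_of_le₀ hb (sqrt_nonneg _)
  rw [sin_arcsin (abs_le.mp hbound).1 (abs_le.mp hbound).2]
  rcases eq_or_ne (√(b ^ 2 + q)) 0 with h | h
  · rw [h, zero_mul]
    exact (abs_nonpos_iff.mp (h ▸ hb)).symm
  · exact mul_div_cancel₀ b h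

theorem sqrt_mul_cos_arcsin_div {b q : ℝ} (hq : 0 < q) :
    √(b ^ 2 + q) * cos (arcsin (b / √(b ^ 2 + q))) = √q := by
  have hpos : 0 < b ^ 2 + q := by positivity
  have hsq : 1 - (b / √(b ^ 2 + q)) ^ 2 = q / (b ^ 2 + q) := by
    rw [div_pow, sq_sqrt hpos.le]
    field_simp
    ring
  rw [cos_arcsin, hsq, sqrt_div' _ hpos.le, mul_div_cancel₀ _ (sqrt_pos.mpr hpos).ne']

theorem sqrt_one_add_div_sq (a : ℝ) {c : ℝ} (hc : 0 < c) :
    √(1 + (a / c) ^ 2) = √(a ^ 2 + c ^ 2) / c := by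
  rw [div_pow, one_add_div (by positivity), add_comm (c ^ 2), sqrt_div' _ (by positivity),
    sqrt_sq hc.le]

theorem sqrt_mul_sin_arctan_div (a : ℝ) {c : ℝ} (hc : 0 < c) :
    √(a ^ 2 + c ^ 2) * sin (arctan (a / c)) = a := by
  have hs : 0 < √(a ^ 2 + c ^ 2) := sqrt_pos.mpr (by positivity)
  rw [sin_arctan, sqrt_one_add_div_sq a hc]
  field_simp

theorem sqrt_mul_cos_arctan_div (a : ℝ) {c : ℝ} (hc : 0 < c) :
    √(a ^ 2 + c ^ 2) * cos (arctan (a / c)) = c := by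
  have hs : 0 < √(a ^ 2 + c ^ 2) := sqrt_pos.mpr (by positivity)
  rw [cos_arctan, sqrt_one_add_div_sq a hc]
  field_simp

end Real

theorem rotate_sq_add_rotate_sq (x y ψ : ℝ) :
    (x * cos ψ + y * sin ψ) ^ 2 + (x * sin ψ - y * cos ψ) ^ 2 = x ^ 2 + y ^ 2 := by
  linear_combination (x ^ 2 + y ^ 2) * sin_sq_add_cos_sq ψ

theorem stmt5_general (g ψ v1 v2 v3 : ℝ) (hv3 : 0 < v3 + g) :
    let T := Real.sqrt (v1 ^ 2 + v2 ^ 2 + (v3 + g) ^ 2)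
    let φ := Real.arcsin ((v1 * Real.sin ψ - v2 * Real.cos ψ) / T)
    let θ := Real.arctan ((v1 * Real.cos ψ + v2 * Real.sin ψ) / (v3 + g))
    T * (Real.cos φ * Real.sin θ * Real.cos ψ + Real.sin φ * Real.sin ψ) = v1 ∧
    T * (Real.cos φ * Real.sin θ * Real.sin ψ - Real.sin φ * Real.cos ψ) = v2 ∧
    T * Real.cos φ * Real.cos θ - g = v3 := by
  intro T φ θ
  set a := v1 * cos ψ + v2 * sin ψ
  set b := v1 * sin ψ - v2 * cos ψ
  set c := v3 + g
  have hT : T = √(b ^ 2 + (a ^ 2 + c ^ 2)) := by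
    rw [show b ^ 2 + (a ^ 2 + c ^ 2) = v1 ^ 2 + v2 ^ 2 + c ^ 2 by
      linear_combination rotate_sq_add_rotate_sq v1 v2 ψ]
  have hTsin : T * sin φ = b := by
    show T * sin (arcsin (b / T)) = b
    rw [hT]
    exact sqrt_mul_sin_arcsin_div (by positivity)
  have hTcos : T * cos φ = √(a ^ 2 + c ^ 2) := by
    show T * cos (arcsin (b / T)) = _
    rw [hT]
    exact sqrt_mul_cos_arcsin_div (by positivity)
  have hsin : √(a ^ 2 + c ^ 2) * sin θ = a := sqrt_mul_sin_arctan_div a hv3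
  have hcos : √(a ^ 2 + c ^ 2) * cos θ = c := sqrt_mul_cos_arctan_div a hv3
  have hpyth := sin_sq_add_cos_sq ψ
  refine ⟨?_, ?_, ?_⟩
  · linear_combination sin θ * cos ψ * hTcos + cos ψ * hsin + sin ψ * hTsin + v1 * hpyth
  · linear_combination sin θ * sin ψ * hTcos + sin ψ * hsin - cos ψ * hTsin + v2 * hpyth
  · linear_combination cos θ * hTcos + hcos

/-- The flatness-based feedback exactly linearizes the dynamics:
`h_ψ(β_ψ(v)) = v` for any `v` with `v₃ + g > 0`. -/
theorem stmt5 (g ψ v1 v2 v3 : ℝ) (hg : 0 < g) (hv3 : 0 < v3 + g) :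
    let T := Real.sqrt (v1 ^ 2 + v2 ^ 2 + (v3 + g) ^ 2)
    let φ := Real.arcsin ((v1 * Real.sin ψ - v2 * Real.cos ψ) / T)
    let θ := Real.arctan ((v1 * Real.cos ψ + v2 * Real.sin ψ) / (v3 + g))
    T * (Real.cos φ * Real.sin θ * Real.cos ψ + Real.sin φ * Real.sin ψ) = v1 ∧
    T * (Real.cos φ * Real.sin θ * Real.sin ψ - Real.sin φ * Real.cos ψ) = v2 ∧
    T * Real.cos φ * Real.cos θ - g = v3 :=
  stmt5_general g ψ v1 v2 v3 hv3
end

section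
/- Let P ≻ 0 be n×n, A n×n, B n×m, α > 0 with (A - B Bᵀ P)ᵀ P + P(A - B Bᵀ P) ⪯ -α P. Let γ ≥ 1 and suppose λ ∈ (0,1] satisfies γλ ≥ 1. Then for the saturated control v = -λ γ Bᵀ P x, one has 2 xᵀ P(Ax + Bv) ≤ -α xᵀ P x - 2(γλ - 1) ‖Bᵀ P x‖² ≤ -α xᵀ P x. -/
open Matrix

/-!
With the closed-loop matrix `K = A - B Bᵀ P` and `y = Bᵀ P x`, the quadratic form of
`Kᵀ P + P K` at `x` is `2 xᵀ P K x`, so the Lyapunov inequality gives `2 xᵀ P K x ≤ -α xᵀ P x`.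
The saturated control only rescales the nominal feedback `-Bᵀ P x` by `γλ`, hence
`2 xᵀ P (A x + B v) = 2 xᵀ P K x - 2 (γλ - 1) ‖y‖²`, and the excess term is nonpositive
as soon as `γλ ≥ 1`.
-/

namespace Matrix

section CommRing

variable {R ι κ : Type*} [CommRing R] [Fintype ι] [Fintype κ]

theorem IsSymm.dotProduct_mulVec_comm {P : Matrix ι ι R} (hP : P.IsSymm) (x z : ι → R) :
    x ⬝ᵥ (P *ᵥ z) = (P *ᵥ x) ⬝ᵥ z := by
  rw [dotProduct_mulVec, ← vecMul_transpose, hP.eq]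

theorem IsSymm.dotProduct_transpose_mul_add_mul_mulVec {P : Matrix ι ι R} (hP : P.IsSymm)
    (K : Matrix ι ι R) (x : ι → R) :
    x ⬝ᵥ ((Kᵀ * P + P * K) *ᵥ x) = 2 * (x ⬝ᵥ (P *ᵥ (K *ᵥ x))) := by
  have hKtP : x ⬝ᵥ ((Kᵀ * P) *ᵥ x) = x ⬝ᵥ (P *ᵥ (K *ᵥ x)) := by
    rw [← mulVec_mulVec, mulVec_transpose, dotProduct_comm, ← dotProduct_mulVec,
      ← hP.dotProduct_mulVec_comm]
  rw [add_mulVec, dotProduct_add, hKtP, ← mulVec_mulVec]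
  ring

theorem IsSymm.dotProduct_mulVec_mulVec_transpose {P : Matrix ι ι R} (hP : P.IsSymm)
    (B : Matrix ι κ R) (x : ι → R) (u : κ → R) :
    x ⬝ᵥ (P *ᵥ (B *ᵥ u)) = (Bᵀ *ᵥ (P *ᵥ x)) ⬝ᵥ u := by
  rw [hP.dotProduct_mulVec_comm x, dotProduct_mulVec (P *ᵥ x), ← mulVec_transpose]

theorem IsSymm.dotProduct_mulVec_closed_loop {P : Matrix ι ι R} (hP : P.IsSymm)
    (A : Matrix ι ι R) (B : Matrix ι κ R) (x : ι → R) :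
    x ⬝ᵥ (P *ᵥ ((A - B * Bᵀ * P) *ᵥ x)) =
      x ⬝ᵥ (P *ᵥ (A *ᵥ x)) - (Bᵀ *ᵥ (P *ᵥ x)) ⬝ᵥ (Bᵀ *ᵥ (P *ᵥ x)) := by
  rw [sub_mulVec, mulVec_sub, dotProduct_sub, Matrix.mul_assoc, ← mulVec_mulVec,
    ← mulVec_mulVec, hP.dotProduct_mulVec_mulVec_transpose B]

theorem IsSymm.dotProduct_mulVec_scaled_feedback {P : Matrix ι ι R} (hP : P.IsSymm)
    (A : Matrix ι ι R) (B : Matrix ι κ R) (c : R) (x : ι → R) :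
    x ⬝ᵥ (P *ᵥ (A *ᵥ x + B *ᵥ -(c • (Bᵀ *ᵥ (P *ᵥ x))))) =
      x ⬝ᵥ (P *ᵥ ((A - B * Bᵀ * P) *ᵥ x)) -
        (c - 1) * ((Bᵀ *ᵥ (P *ᵥ x)) ⬝ᵥ (Bᵀ *ᵥ (P *ᵥ x))) := by
  rw [hP.dotProduct_mulVec_closed_loop, mulVec_add, dotProduct_add,
    hP.dotProduct_mulVec_mulVec_transpose B, dotProduct_neg, dotProduct_smul, smul_eq_mul]
  ring

end CommRing

theorem PosSemidef.two_mul_dotProduct_mulVec_le {ι : Type*} [Fintype ι] {P K : Matrix ι ι ℝ}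
    (hP : P.IsSymm) {α : ℝ} (hLyap : (-(α • P) - (Kᵀ * P + P * K)).PosSemidef) (x : ι → ℝ) :
    2 * (x ⬝ᵥ (P *ᵥ (K *ᵥ x))) ≤ -α * (x ⬝ᵥ (P *ᵥ x)) := by
  have h := hLyap.dotProduct_mulVec_nonneg x
  rw [star_trivial, sub_mulVec, dotProduct_sub, hP.dotProduct_transpose_mul_add_mul_mulVec,
    neg_mulVec, smul_mulVec, dotProduct_neg, dotProduct_smul, smul_eq_mul] at h
  linarith

end Matrix

theorem stmt7_general (n m : ℕ) (P A : Matrix (Fin n) (Fin n) ℝ) (B : Matrix (Fin n) (Fin m) ℝ)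
    (α γ lam : ℝ) (hγlam : 1 ≤ γ * lam)
    (hP : P.PosDef)
    (hLyap : ((-(α • P)) - ((A - B * Bᵀ * P)ᵀ * P + P * (A - B * Bᵀ * P))).PosSemidef)
    (x : Fin n → ℝ) :
    let v : Fin m → ℝ := -((lam * γ) • (Bᵀ *ᵥ (P *ᵥ x)))
    2 * (x ⬝ᵥ (P *ᵥ (A *ᵥ x + B *ᵥ v))) ≤
        -α * (x ⬝ᵥ (P *ᵥ x)) -
          2 * (γ * lam - 1) * ((Bᵀ *ᵥ (P *ᵥ x)) ⬝ᵥ (Bᵀ *ᵥ (P *ᵥ x))) ∧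
      -α * (x ⬝ᵥ (P *ᵥ x)) -
          2 * (γ * lam - 1) * ((Bᵀ *ᵥ (P *ᵥ x)) ⬝ᵥ (Bᵀ *ᵥ (P *ᵥ x))) ≤
        -α * (x ⬝ᵥ (P *ᵥ x)) := by
  intro v
  have hPsymm : P.IsSymm := isHermitian_iff_isSymm.mp hP.isHermitian
  have hclosed := hLyap.two_mul_dotProduct_mulVec_le hPsymm x
  have hy : 0 ≤ (Bᵀ *ᵥ (P *ᵥ x)) ⬝ᵥ (Bᵀ *ᵥ (P *ᵥ x)) := by
    simpa only [star_trivial] using dotProduct_self_star_nonneg (Bᵀ *ᵥ (P *ᵥ x))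
  rw [hPsymm.dotProduct_mulVec_scaled_feedback, mul_comm lam γ]
  constructor
  · linarith
  · nlinarith

/-- Lyapunov decrease for the saturated control `v = -λ γ Bᵀ P x` with `γλ ≥ 1`:
`2 xᵀ P (A x + B v) ≤ -α xᵀ P x - 2(γλ-1)‖Bᵀ P x‖² ≤ -α xᵀ P x`. -/
theorem stmt7 (n m : ℕ) (P A : Matrix (Fin n) (Fin n) ℝ) (B : Matrix (Fin n) (Fin m) ℝ)
    (α γ lam : ℝ) (hα : 0 < α) (hγ : 1 ≤ γ)
    (hlam : lam ∈ Set.Ioc (0 : ℝ) 1) (hγlam : 1 ≤ γ * lam)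
    (hP : P.PosDef)
    (hLyap : ((-(α • P)) - ((A - B * Bᵀ * P)ᵀ * P + P * (A - B * Bᵀ * P))).PosSemidef)
    (x : Fin n → ℝ) :
    let v : Fin m → ℝ := -((lam * γ) • (Bᵀ *ᵥ (P *ᵥ x)))
    2 * (x ⬝ᵥ (P *ᵥ (A *ᵥ x + B *ᵥ v))) ≤
        -α * (x ⬝ᵥ (P *ᵥ x)) -
          2 * (γ * lam - 1) * ((Bᵀ *ᵥ (P *ᵥ x)) ⬝ᵥ (Bᵀ *ᵥ (P *ᵥ x))) ∧
      -α * (x ⬝ᵥ (P *ᵥ x)) -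
          2 * (γ * lam - 1) * ((Bᵀ *ᵥ (P *ᵥ x)) ⬝ᵥ (Bᵀ *ᵥ (P *ᵥ x))) ≤
        -α * (x ⬝ᵥ (P *ᵥ x)) :=
  stmt7_general n m P A B α γ lam hγlam hP hLyap x
end

section
/- Let g > 0, T_max > g, ε_max ∈ (0, π/2), and let V_c = { v ∈ R^3 : v1^2+v2^2+(v3+g)^2 ≤ T_max^2, v1^2+v2^2 ≤ (v3+g)^2 tan^2 ε_max, v3 ≥ -g }. If ρ > 0 satisfies ρ ≤ min( (T_max - g)^2, g^2 sin^2 ε_max ), then the closed ball B(ρ) = { v : ‖v‖² ≤ ρ } centered at the origin is contained in V_c. -/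
open Real

/-- If `ρ ≤ min((T_max - g)², g² sin² ε_max)` then the closed ball `B(ρ)` of
squared radius `ρ` around the origin is contained in `V_c`. -/
theorem stmt10 (g Tmax εmax ρ : ℝ) (hg : 0 < g) (hT : g < Tmax)
    (hε : εmax ∈ Set.Ioo 0 (Real.pi / 2)) (hρ : 0 < ρ)
    (hρle : ρ ≤ min ((Tmax - g) ^ 2) (g ^ 2 * Real.sin εmax ^ 2)) :
    ∀ v1 v2 v3 : ℝ, v1 ^ 2 + v2 ^ 2 + v3 ^ 2 ≤ ρ →
      v1 ^ 2 + v2 ^ 2 + (v3 + g) ^ 2 ≤ Tmax ^ 2 ∧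
      v1 ^ 2 + v2 ^ 2 ≤ (v3 + g) ^ 2 * Real.tan εmax ^ 2 ∧
      -g ≤ v3 := by
  obtain ⟨hε0, hε1⟩ := hε
  have hc : 0 < Real.cos εmax := Real.cos_pos_of_mem_Ioo ⟨by linarith [Real.pi_pos], hε1⟩
  have hs : 0 < Real.sin εmax := Real.sin_pos_of_pos_of_lt_pi hε0 (by linarith [Real.pi_pos])
  have hs1 : Real.sin εmax < 1 := by
    have := Real.cos_sq_add_sin_sq εmax
    nlinarith
  have hpyth : Real.cos εmax ^ 2 + Real.sin εmax ^ 2 = 1 := Real.cos_sq_add_sin_sq εmax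
  have h1 := le_trans hρle (min_le_left _ _)
  have h2 := le_trans hρle (min_le_right _ _)
  intro v1 v2 v3 hv
  have hTg : 0 < Tmax - g := by linarith
  set s := Real.sin εmax
  set c := Real.cos εmax
  have hv3 : v3 ^ 2 ≤ g ^ 2 * s ^ 2 := by nlinarith [sq_nonneg v1, sq_nonneg v2]
  have hneg : -g ≤ v3 := by nlinarith
  refine ⟨?_, ?_, hneg⟩
  · nlinarith [sq_nonneg v1, sq_nonneg v2, sq_nonneg (v3 - (Tmax - g)), sq_nonneg (v3 + (Tmax - g))]
  · have htan : Real.tan εmax = s / c := Real.tan_eq_sin_div_cos εmax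
    rw [htan, div_pow]
    have key : c ^ 2 * (v1 ^ 2 + v2 ^ 2) ≤ s ^ 2 * (v3 + g) ^ 2 := by
      nlinarith [sq_nonneg (v3 + g * s ^ 2)]
    have hc2 : (0:ℝ) < c ^ 2 := by positivity
    rw [← mul_div_assoc, le_div_iff₀ hc2]
    nlinarith [key]
end

section
/- Let P ≻ 0 (n×n), B (n×m), ρ > 0, ε > 0, and suppose xᵀ P x ≤ ε implies ‖Bᵀ P x‖² ≤ ρ for all x. Let C ⊂ R^m be compact convex with ball B(ρ) = {v : ‖v‖² ≤ ρ} ⊆ C and 0 in the interior of C, with gauge-based saturation sat as above. Then for any γ ≥ 1 and x with xᵀ P x ≤ ε, writing sat(-γ Bᵀ P x) = -λ γ Bᵀ P x with λ = λ*(-γ Bᵀ P x) when -γ Bᵀ P x ∉ C (and λ = 1 otherwise), one has γ λ ≥ 1, i.e. ‖sat(-γ Bᵀ P x)‖ ≥ ‖Bᵀ P x‖. -/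
open Matrix

open Classical in
/-- Inside the ellipsoid `{x : xᵀPx ≤ ε}`, the saturated high-gain feedback
`sat(-γ Bᵀ P x)` is at least as strong as the nominal feedback: `γ λ* ≥ 1`,
i.e. `‖sat(-γ BᵀPx)‖ ≥ ‖BᵀPx‖`. -/
theorem stmt13 (n m : ℕ) (P : Matrix (Fin n) (Fin n) ℝ) (B : Matrix (Fin n) (Fin m) ℝ)
    (ρ ε : ℝ) (hρ : 0 < ρ) (hε : 0 < ε) (hP : P.PosDef)
    (hcert : ∀ x : Fin n → ℝ, x ⬝ᵥ (P *ᵥ x) ≤ ε →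
      (Bᵀ *ᵥ (P *ᵥ x)) ⬝ᵥ (Bᵀ *ᵥ (P *ᵥ x)) ≤ ρ)
    (C : Set (Fin m → ℝ)) (hC : IsCompact C) (hconv : Convex ℝ C)
    (hball : {v : Fin m → ℝ | v ⬝ᵥ v ≤ ρ} ⊆ C)
    (h0 : (0 : Fin m → ℝ) ∈ interior C)
    (lstar : (Fin m → ℝ) → ℝ)
    (hlstar : ∀ v ∉ C, IsGreatest {l : ℝ | 0 ≤ l ∧ l • v ∈ C} (lstar v))
    (γ : ℝ) (hγ : 1 ≤ γ)
    (x : Fin n → ℝ) (hx : x ⬝ᵥ (P *ᵥ x) ≤ ε) :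
    let w : Fin m → ℝ := -(γ • (Bᵀ *ᵥ (P *ᵥ x)))
    let satw : Fin m → ℝ := if w ∈ C then w else lstar w • w
    (w ∉ C → 1 ≤ γ * lstar w) ∧
      (Bᵀ *ᵥ (P *ᵥ x)) ⬝ᵥ (Bᵀ *ᵥ (P *ᵥ x)) ≤ satw ⬝ᵥ satw := by
  intro w satw
  set u : Fin m → ℝ := Bᵀ *ᵥ (P *ᵥ x) with hu
  have huρ : u ⬝ᵥ u ≤ ρ := hcert x hx
  have hun : 0 ≤ u ⬝ᵥ u := by
    apply Finset.sum_nonneg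
    intro i _
    exact mul_self_nonneg _
  have hγ0 : (0:ℝ) < γ := lt_of_lt_of_le one_pos hγ
  have hmemC : -u ∈ C := by
    apply hball
    have : (-u) ⬝ᵥ (-u) = u ⬝ᵥ u := by
      simp [neg_dotProduct, dotProduct_neg]
    simpa [Set.mem_setOf_eq, this] using huρ
  have hww : w ⬝ᵥ w = γ * γ * (u ⬝ᵥ u) := by
    show (-(γ • u)) ⬝ᵥ (-(γ • u)) = γ * γ * (u ⬝ᵥ u)
    rw [neg_dotProduct, dotProduct_neg, neg_neg, smul_dotProduct, dotProduct_smul,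
      smul_eq_mul, smul_eq_mul, ← mul_assoc]
  have hkey : w ∉ C → 1 ≤ γ * lstar w := by
    intro hw
    have hmem : (1/γ : ℝ) ∈ {l : ℝ | 0 ≤ l ∧ l • w ∈ C} := by
      constructor
      · positivity
      · have : (1/γ : ℝ) • w = -u := by
          simp only [w, smul_neg, smul_smul]
          rw [one_div_mul_cancel (ne_of_gt hγ0), one_smul]
        rw [this]; exact hmemC
    have := (hlstar w hw).2 hmem
    calc (1:ℝ) = γ * (1/γ) := by field_simp
    _ ≤ γ * lstar w := by
        exact mul_le_mul_of_nonneg_left this (le_of_lt hγ0)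
  refine ⟨hkey, ?_⟩
  by_cases hw : w ∈ C
  · have : satw = w := if_pos hw
    rw [this, hww]
    have h2 : 1 ≤ γ * γ := by nlinarith
    nlinarith [mul_le_mul_of_nonneg_right h2 hun]
  · have : satw = lstar w • w := if_neg hw
    have hss : satw ⬝ᵥ satw = (lstar w) * (lstar w) * (w ⬝ᵥ w) := by
      rw [this]
      rw [smul_dotProduct, dotProduct_smul, smul_eq_mul, smul_eq_mul, ← mul_assoc]
    have h1 := hkey hw
    rw [hss, hww]
    have h3 : 1 ≤ (lstar w * γ) * (lstar w * γ) := by nlinarith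
    nlinarith [mul_le_mul_of_nonneg_right h3 hun]
end

section
/- Consider the double-integrator system ẋ = A x + B v on R^6 with A = [[0,I3],[0,0]], B = [0;I3]. Let P ≻ 0 satisfy (A - B BᵀP)ᵀP + P(A - B BᵀP) ⪯ -αP for some α > 0, let ρ, ε > 0 be such that xᵀPx ≤ ε implies ‖BᵀPx‖² ≤ ρ, let C ⊂ R^3 be compact convex with {v: ‖v‖² ≤ ρ} ⊆ C and 0 ∈ int C, and let γ ≥ 1. Then along any solution of ẋ = Ax + B sat(-γ BᵀPx) with x(0)ᵀPx(0) ≤ ε, the function V(t) = x(t)ᵀPx(t) satisfies V̇(t) ≤ -α V(t) whenever V(t) ≤ ε; consequently { x : xᵀPx ≤ ε } is forward invariant and every solution starting in it converges exponentially to the origin (V(t) ≤ e^{-αt} V(0)). -/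
/-!
Along the closed loop, `V̇ = xᵀ(A_Kᵀ P + P A_K)x + 2⟪u + w, w⟫` with `A_K = A - B BᵀP`,
`w = BᵀPx` and `u` the applied input. Inside the sublevel set `{V ≤ ε}` we have `‖w‖² ≤ ρ`,
so `-w ∈ C`; the radial saturation of `γ(-w)` is then `κ(-w)` with `κ ≥ 1`, which makes the
input term `2(1 - κ)‖w‖²` nonpositive and leaves `V̇ ≤ -αV`. The decay estimate keeps `V` below
`ε` (forward invariance), and Grönwall's inequality gives `V(t) ≤ e^{-αt} V(0)`.
-/

open Matrix

def Amat : Matrix (Fin 3 ⊕ Fin 3) (Fin 3 ⊕ Fin 3) ℝ := Matrix.fromBlocks 0 1 0 0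

/-- The double-integrator input matrix `B = [0; I₃]`. -/
def Bmat : Matrix (Fin 3 ⊕ Fin 3) (Fin 3) ℝ :=
  Matrix.of fun i j => Sum.casesOn i (fun _ => (0 : ℝ)) (fun i' => if i' = j then 1 else 0)

section ScalarComparison

variable {f f' : ℝ → ℝ}

theorem le_of_hasDerivAt_neg_of_eq {ε : ℝ} (hf : ∀ t, HasDerivAt f (f' t) t) (h0 : f 0 ≤ ε)
    (hneg : ∀ t, 0 ≤ t → f t = ε → f' t < 0) {t : ℝ} (ht : 0 ≤ t) : f t ≤ ε :=
  image_le_of_deriv_right_lt_deriv_boundary (B := fun _ => ε)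
    (fun s _ => (hf s).continuousAt.continuousWithinAt) (fun s _ => (hf s).hasDerivWithinAt) h0
    (fun _ => hasDerivAt_const _ _) (fun s hs => hneg s hs.1) ⟨ht, le_rfl⟩

theorem le_exp_mul_of_hasDerivAt_le_mul {K : ℝ} (hf : ∀ t, HasDerivAt f (f' t) t)
    (bound : ∀ t, 0 ≤ t → f' t ≤ K * f t) {t : ℝ} (ht : 0 ≤ t) :
    f t ≤ Real.exp (K * t) * f 0 := by
  have := le_gronwallBound_of_liminf_deriv_right_le (ε := 0) (a := 0) (b := t)
    (fun s _ => (hf s).continuousAt.continuousWithinAt)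
    (fun s _ _ hr => (hf s).hasDerivWithinAt.liminf_right_slope_le hr) le_rfl
    (fun s hs => by simpa using bound s hs.1) t ⟨ht, le_rfl⟩
  rwa [gronwallBound_ε0, sub_zero, mul_comm] at this

theorem le_and_le_exp_of_hasDerivAt_le_on_sublevel {α ε : ℝ} (hα : 0 < α) (hε : 0 < ε)
    (hf : ∀ t, HasDerivAt f (f' t) t) (h0 : f 0 ≤ ε)
    (hdecay : ∀ t, f t ≤ ε → f' t ≤ -α * f t) {t : ℝ} (ht : 0 ≤ t) :
    f t ≤ ε ∧ f t ≤ Real.exp (-α * t) * f 0 := by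
  have hinv : ∀ s, 0 ≤ s → f s ≤ ε := fun s hs =>
    le_of_hasDerivAt_neg_of_eq hf h0
      (fun r _ hr => (hdecay r hr.le).trans_lt (by rw [hr]; nlinarith)) hs
  exact ⟨hinv t ht, le_exp_mul_of_hasDerivAt_le_mul hf (fun s hs => hdecay s (hinv s hs)) ht⟩

end ScalarComparison

section QuadraticForm

variable {n m : Type*} [Fintype n] [Fintype m]

theorem HasDerivAt.dotProduct {u v : ℝ → n → ℝ} {u' v' : n → ℝ} {t : ℝ}
    (hu : HasDerivAt u u' t) (hv : HasDerivAt v v' t) :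
    HasDerivAt (fun s => u s ⬝ᵥ v s) (u' ⬝ᵥ v t + u t ⬝ᵥ v') t := by
  have := HasDerivAt.fun_sum (u := Finset.univ) fun i _ =>
    (hasDerivAt_pi.mp hu i).fun_mul (hasDerivAt_pi.mp hv i)
  rwa [Finset.sum_add_distrib] at this

theorem HasDerivAt.mulVec {l : Type*} (M : Matrix l n ℝ) {u : ℝ → n → ℝ} {u' : n → ℝ} {t : ℝ}
    (hu : HasDerivAt u u' t) : HasDerivAt (fun s => M *ᵥ u s) (M *ᵥ u') t :=
  hasDerivAt_pi.mpr fun _ =>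
    HasDerivAt.fun_sum fun j _ => (hasDerivAt_pi.mp hu j).const_mul _

theorem dotProduct_mulVec_comm_of_transpose_eq {R : Type*} [CommRing R] {P : Matrix n n R}
    (hP : Pᵀ = P) (x y : n → R) : x ⬝ᵥ (P *ᵥ y) = y ⬝ᵥ (P *ᵥ x) := by
  rw [← hP, dotProduct_transpose_mulVec, hP]

theorem dotProduct_mulVec_add_mulVec_eq_closedLoop {R : Type*} [CommRing R] (A : Matrix n n R)
    (B : Matrix n m R) {P : Matrix n n R} (hP : Pᵀ = P) (x : n → R) (u : m → R) :
    (A *ᵥ x + B *ᵥ u) ⬝ᵥ (P *ᵥ x) + x ⬝ᵥ (P *ᵥ (A *ᵥ x + B *ᵥ u)) =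
      x ⬝ᵥ (((A - B * Bᵀ * P)ᵀ * P + P * (A - B * Bᵀ * P)) *ᵥ x) +
        2 * ((u + Bᵀ *ᵥ (P *ᵥ x)) ⬝ᵥ (Bᵀ *ᵥ (P *ᵥ x))) := by
  have hBP : ∀ v, (B *ᵥ v) ⬝ᵥ (P *ᵥ x) = v ⬝ᵥ (Bᵀ *ᵥ (P *ᵥ x)) := fun v => by
    rw [dotProduct_transpose_mulVec, dotProduct_comm]
  have hPB : ∀ v, x ⬝ᵥ (P *ᵥ (B *ᵥ v)) = v ⬝ᵥ (Bᵀ *ᵥ (P *ᵥ x)) := fun v => by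
    rw [dotProduct_mulVec_comm_of_transpose_eq hP, hBP]
  have hAP : x ⬝ᵥ (P *ᵥ (A *ᵥ x)) = (A *ᵥ x) ⬝ᵥ (P *ᵥ x) :=
    dotProduct_mulVec_comm_of_transpose_eq hP _ _
  have hPA : x ⬝ᵥ (Aᵀ *ᵥ (P *ᵥ x)) = (A *ᵥ x) ⬝ᵥ (P *ᵥ x) := by
    rw [dotProduct_transpose_mulVec, dotProduct_comm]
  simp only [transpose_sub, transpose_mul, hP, transpose_transpose, add_mulVec, sub_mulVec,
    mul_sub, sub_mul, ← mulVec_mulVec, mulVec_add, dotProduct_add, dotProduct_sub, add_dotProduct,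
    hBP, hPB, hAP, hPA]
  ring

theorem dotProduct_mulVec_add_mulVec_le_of_one_le_gain (A : Matrix n n ℝ) (B : Matrix n m ℝ)
    {P : Matrix n n ℝ} (hP : Pᵀ = P) {α : ℝ}
    (hLyap : (-(α • P) - ((A - B * Bᵀ * P)ᵀ * P + P * (A - B * Bᵀ * P))).PosSemidef)
    (x : n → ℝ) {κ : ℝ} (hκ : 1 ≤ κ) :
    (A *ᵥ x + B *ᵥ (κ • -(Bᵀ *ᵥ (P *ᵥ x)))) ⬝ᵥ (P *ᵥ x) +
        x ⬝ᵥ (P *ᵥ (A *ᵥ x + B *ᵥ (κ • -(Bᵀ *ᵥ (P *ᵥ x))))) ≤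
      -α * (x ⬝ᵥ (P *ᵥ x)) := by
  set w := Bᵀ *ᵥ (P *ᵥ x)
  have hQ := hLyap.dotProduct_mulVec_nonneg x
  simp only [star_trivial, sub_mulVec, neg_mulVec, smul_mulVec, dotProduct_sub, dotProduct_neg,
    dotProduct_smul, smul_eq_mul] at hQ
  have hinput : (κ • -w + w) ⬝ᵥ w = (1 - κ) * (w ⬝ᵥ w) := by
    simp only [add_dotProduct, smul_dotProduct, neg_dotProduct, smul_eq_mul]
    ring
  have hw : 0 ≤ w ⬝ᵥ w := Finset.sum_nonneg fun i _ => mul_self_nonneg (w i)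
  rw [dotProduct_mulVec_add_mulVec_eq_closedLoop A B hP, hinput]
  nlinarith

end QuadraticForm

open Classical in
theorem exists_one_le_sat_smul_eq_smul {E : Type*} [AddCommGroup E] [Module ℝ E] {C : Set E}
    {lstar : E → ℝ} (hlstar : ∀ v ∉ C, IsGreatest {l : ℝ | 0 ≤ l ∧ l • v ∈ C} (lstar v))
    {sat : E → E} (hsat : ∀ v, sat v = if v ∈ C then v else lstar v • v)
    {γ : ℝ} (hγ : 1 ≤ γ) {v : E} (hv : v ∈ C) : ∃ κ : ℝ, 1 ≤ κ ∧ sat (γ • v) = κ • v := by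
  have hγ0 : 0 < γ := zero_lt_one.trans_le hγ
  by_cases hγv : γ • v ∈ C
  · exact ⟨γ, hγ, by rw [hsat, if_pos hγv]⟩
  refine ⟨γ * lstar (γ • v), ?_, by rw [hsat, if_neg hγv, smul_smul, mul_comm]⟩
  have hinv : γ⁻¹ ≤ lstar (γ • v) :=
    (hlstar _ hγv).2 ⟨inv_nonneg.mpr hγ0.le, by rwa [smul_smul, inv_mul_cancel₀ hγ0.ne', one_smul]⟩
  calc (1 : ℝ) = γ * γ⁻¹ := (mul_inv_cancel₀ hγ0.ne').symm
    _ ≤ γ * lstar (γ • v) := mul_le_mul_of_nonneg_left hinv hγ0.le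

open Classical in
theorem stmt14_general (P : Matrix (Fin 3 ⊕ Fin 3) (Fin 3 ⊕ Fin 3) ℝ)
    (α ρ ε γ : ℝ) (hα : 0 < α) (hε : 0 < ε) (hγ : 1 ≤ γ)
    (hP : P.PosDef)
    (hLyap : ((-(α • P)) -
      ((Amat - Bmat * Bmatᵀ * P)ᵀ * P + P * (Amat - Bmat * Bmatᵀ * P))).PosSemidef)
    (hcert : ∀ y : Fin 3 ⊕ Fin 3 → ℝ, y ⬝ᵥ (P *ᵥ y) ≤ ε →
      (Bmatᵀ *ᵥ (P *ᵥ y)) ⬝ᵥ (Bmatᵀ *ᵥ (P *ᵥ y)) ≤ ρ)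
    (C : Set (Fin 3 → ℝ))
    (hball : {v : Fin 3 → ℝ | v ⬝ᵥ v ≤ ρ} ⊆ C)
    (lstar : (Fin 3 → ℝ) → ℝ)
    (hlstar : ∀ v ∉ C, IsGreatest {l : ℝ | 0 ≤ l ∧ l • v ∈ C} (lstar v))
    (sat : (Fin 3 → ℝ) → (Fin 3 → ℝ))
    (hsat : ∀ v, sat v = if v ∈ C then v else lstar v • v)
    (x : ℝ → (Fin 3 ⊕ Fin 3 → ℝ))
    (hode : ∀ t : ℝ, HasDerivAt x
      (Amat *ᵥ x t + Bmat *ᵥ sat (-(γ • (Bmatᵀ *ᵥ (P *ᵥ x t))))) t)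
    (hx0 : x 0 ⬝ᵥ (P *ᵥ x 0) ≤ ε) :
    (∀ t : ℝ, x t ⬝ᵥ (P *ᵥ x t) ≤ ε →
      deriv (fun s => x s ⬝ᵥ (P *ᵥ x s)) t ≤ -α * (x t ⬝ᵥ (P *ᵥ x t))) ∧
    ∀ t : ℝ, 0 ≤ t →
      x t ⬝ᵥ (P *ᵥ x t) ≤ ε ∧
      x t ⬝ᵥ (P *ᵥ x t) ≤ Real.exp (-α * t) * (x 0 ⬝ᵥ (P *ᵥ x 0)) := by
  have hPsymm : Pᵀ = P := by simpa using hP.isHermitian.eq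
  have hV := fun t => (hode t).dotProduct ((hode t).mulVec P)
  have hdecay : ∀ t, x t ⬝ᵥ (P *ᵥ x t) ≤ ε →
      deriv (fun s => x s ⬝ᵥ (P *ᵥ x s)) t ≤ -α * (x t ⬝ᵥ (P *ᵥ x t)) := by
    intro t ht
    set w := Bmatᵀ *ᵥ (P *ᵥ x t)
    have hw : -w ∈ C := hball <| show -w ⬝ᵥ -w ≤ ρ by
      rw [neg_dotProduct, dotProduct_neg, neg_neg]
      exact hcert (x t) ht
    obtain ⟨κ, hκ, hsatκ⟩ := exists_one_le_sat_smul_eq_smul hlstar hsat hγ hw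
    rw [smul_neg] at hsatκ
    rw [(hV t).deriv, hsatκ]
    exact dotProduct_mulVec_add_mulVec_le_of_one_le_gain Amat Bmat hPsymm hLyap (x t) hκ
  exact ⟨hdecay, fun t ht => le_and_le_exp_of_hasDerivAt_le_on_sublevel hα hε
    (fun s => (hV s).differentiableAt.hasDerivAt) hx0 hdecay ht⟩

open Classical in
/-- Main stability theorem: for the double integrator `ẋ = Ax + B sat(-γBᵀPx)`
with the radial saturation onto `C`, the ellipsoid `{x : xᵀPx ≤ ε}` is forward
invariant, `V̇ ≤ -αV` holds inside it, and solutions converge exponentially. -/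
theorem stmt14 (P : Matrix (Fin 3 ⊕ Fin 3) (Fin 3 ⊕ Fin 3) ℝ)
    (α ρ ε γ : ℝ) (hα : 0 < α) (hρ : 0 < ρ) (hε : 0 < ε) (hγ : 1 ≤ γ)
    (hP : P.PosDef)
    (hLyap : ((-(α • P)) -
      ((Amat - Bmat * Bmatᵀ * P)ᵀ * P + P * (Amat - Bmat * Bmatᵀ * P))).PosSemidef)
    (hcert : ∀ y : Fin 3 ⊕ Fin 3 → ℝ, y ⬝ᵥ (P *ᵥ y) ≤ ε →
      (Bmatᵀ *ᵥ (P *ᵥ y)) ⬝ᵥ (Bmatᵀ *ᵥ (P *ᵥ y)) ≤ ρ)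
    (C : Set (Fin 3 → ℝ)) (hC : IsCompact C) (hconv : Convex ℝ C)
    (hball : {v : Fin 3 → ℝ | v ⬝ᵥ v ≤ ρ} ⊆ C)
    (h0 : (0 : Fin 3 → ℝ) ∈ interior C)
    (lstar : (Fin 3 → ℝ) → ℝ)
    (hlstar : ∀ v ∉ C, IsGreatest {l : ℝ | 0 ≤ l ∧ l • v ∈ C} (lstar v))
    (sat : (Fin 3 → ℝ) → (Fin 3 → ℝ))
    (hsat : ∀ v, sat v = if v ∈ C then v else lstar v • v)
    (x : ℝ → (Fin 3 ⊕ Fin 3 → ℝ))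
    (hode : ∀ t : ℝ, HasDerivAt x
      (Amat *ᵥ x t + Bmat *ᵥ sat (-(γ • (Bmatᵀ *ᵥ (P *ᵥ x t))))) t)
    (hx0 : x 0 ⬝ᵥ (P *ᵥ x 0) ≤ ε) :
    (∀ t : ℝ, x t ⬝ᵥ (P *ᵥ x t) ≤ ε →
      deriv (fun s => x s ⬝ᵥ (P *ᵥ x s)) t ≤ -α * (x t ⬝ᵥ (P *ᵥ x t))) ∧
    ∀ t : ℝ, 0 ≤ t →
      x t ⬝ᵥ (P *ᵥ x t) ≤ ε ∧
      x t ⬝ᵥ (P *ᵥ x t) ≤ Real.exp (-α * t) * (x 0 ⬝ᵥ (P *ᵥ x 0)) :=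
  stmt14_general P α ρ ε γ hα hε hγ hP hLyap hcert C hball lstar hlstar sat hsat x hode hx0
end

section
/- Let P ≻ 0 (n×n), B (n×m), ρ > 0 with B ≠ 0. Define ε* = ρ / σ_max, where σ_max is the largest eigenvalue of the symmetric positive semidefinite matrix P^{1/2} B Bᵀ P^{1/2}. Then ε* is the largest ε > 0 such that xᵀ P x ≤ ε implies ‖Bᵀ P x‖² ≤ ρ for all x ∈ R^n. -/
open Matrix

/-- The positive semidefinite square root of a positive semidefinite matrix, with the
definition `Matrix.PosSemidef.sqrt` had in the older Mathlib (removed since). -/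
noncomputable def Matrix.PosSemidef.sqrt {n : Type*} [Fintype n] [DecidableEq n]
    {A : Matrix n n ℝ} (hA : A.PosSemidef) : Matrix n n ℝ :=
  hA.1.eigenvectorUnitary.1 * diagonal ((↑) ∘ (√·) ∘ hA.1.eigenvalues) *
  (star hA.1.eigenvectorUnitary : Matrix n n ℝ)

/-!
Write `Q = P^{1/2}`: it is symmetric and invertible with `Q * Q = P`, so the substitution
`y = Q x` turns `xᵀ P x` into `‖y‖²` and `‖Bᵀ P x‖²` into `yᵀ S y` with `S = (Q B) (Q B)ᵀ`.
All eigenvalues of `S` are at most `σ_max`, so `S ≤ σ_max • 1` in the Loewner order and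
`‖y‖² ≤ ρ / σ_max` forces `yᵀ S y ≤ ρ`. Conversely an eigenvector of `S` for `σ_max`, scaled to
`‖y‖² = ε`, has `yᵀ S y = σ_max ε`, so no larger level works. Finally `σ_max > 0` because `S` is
a nonzero positive semidefinite matrix.
-/

open scoped MatrixOrder ComplexOrder

namespace Matrix

variable {ι κ : Type*} [Fintype ι] [Fintype κ]

theorem dotProduct_mulVec_transpose_mul_self {R : Type*} [CommSemiring R] (M : Matrix κ ι R)
    (x : ι → R) : x ⬝ᵥ ((Mᵀ * M) *ᵥ x) = (M *ᵥ x) ⬝ᵥ (M *ᵥ x) := by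
  rw [← mulVec_mulVec, dotProduct_mulVec, vecMul_transpose]

variable [DecidableEq ι]

theorem mem_spectrum_iff_exists_mulVec_eq_smul {K : Type*} [Field K] {A : Matrix ι ι K} {μ : K} :
    μ ∈ spectrum K A ↔ ∃ x, x ≠ 0 ∧ A *ᵥ x = μ • x := by
  rw [← spectrum_toLin', ← Module.End.hasEigenvalue_iff_mem_spectrum]
  constructor
  · intro h
    obtain ⟨x, hx⟩ := h.exists_hasEigenvector
    exact ⟨x, hx.2, by simpa using hx.apply_eq_smul⟩
  · rintro ⟨x, hx0, hx⟩
    exact Module.End.hasEigenvalue_of_hasEigenvector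
      ⟨Module.End.mem_eigenspace_iff.2 (by simpa using hx), hx0⟩

theorem PosSemidef.sqrt_eq_cfcSqrt {A : Matrix ι ι ℝ} (hA : A.PosSemidef) :
    hA.sqrt = CFC.sqrt A := by
  rw [CFC.sqrt_eq_real_sqrt A hA.nonneg, cfcₙ_eq_cfc, hA.1.cfc_eq, IsHermitian.cfc,
    Unitary.conjStarAlgAut_apply, PosSemidef.sqrt]
  rfl

theorem PosSemidef.transpose_sqrt {A : Matrix ι ι ℝ} (hA : A.PosSemidef) :
    hA.sqrtᵀ = hA.sqrt := by
  rw [← conjTranspose_eq_transpose_of_trivial, hA.sqrt_eq_cfcSqrt]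
  exact (CFC.sqrt_nonneg A).posSemidef.isHermitian

theorem PosSemidef.sqrt_mul_self {A : Matrix ι ι ℝ} (hA : A.PosSemidef) :
    hA.sqrt * hA.sqrt = A := by
  rw [hA.sqrt_eq_cfcSqrt, CFC.sqrt_mul_sqrt_self A hA.nonneg]

theorem PosDef.isUnit_sqrt {A : Matrix ι ι ℝ} (hA : A.PosDef) : IsUnit hA.posSemidef.sqrt := by
  rw [hA.posSemidef.sqrt_eq_cfcSqrt, CFC.isUnit_sqrt_iff A hA.posSemidef.nonneg]
  exact hA.isUnit

theorem PosSemidef.exists_pos_mem_spectrum {𝕜 : Type*} [RCLike 𝕜] {S : Matrix ι ι 𝕜}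
    (hS : S.PosSemidef) (hS0 : S ≠ 0) : ∃ μ ∈ spectrum ℝ S, 0 < μ := by
  obtain ⟨i, hi⟩ : ∃ i, hS.1.eigenvalues i ≠ 0 := by
    by_contra! h
    exact hS0 (hS.1.eigenvalues_eq_zero_iff.1 (funext h))
  exact ⟨_, hS.1.eigenvalues_mem_spectrum_real i, (hS.eigenvalues_nonneg i).lt_of_ne' hi⟩

theorem IsHermitian.dotProduct_mulVec_le {S : Matrix ι ι ℝ} (hS : S.IsHermitian) {σ : ℝ}
    (hσ : σ ∈ upperBounds (spectrum ℝ S)) (y : ι → ℝ) :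
    y ⬝ᵥ (S *ᵥ y) ≤ σ * (y ⬝ᵥ y) := by
  have hle : S ≤ algebraMap ℝ _ σ := le_algebraMap_of_spectrum_le hσ (ha := hS.isSelfAdjoint)
  have h := (Matrix.le_iff.1 hle).dotProduct_mulVec_nonneg y
  simp only [star_trivial, Algebra.algebraMap_eq_smul_one, sub_mulVec, smul_mulVec, one_mulVec,
    dotProduct_sub, dotProduct_smul, smul_eq_mul] at h
  linarith

theorem isGreatest_ball_level_of_isGreatest_spectrum (M : Matrix ι κ ℝ) (hM : M ≠ 0)
    {ρ σ : ℝ} (hρ : 0 < ρ) (hσ : IsGreatest (spectrum ℝ (M * Mᵀ)) σ) :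
    IsGreatest {ε | 0 < ε ∧ ∀ y : ι → ℝ, y ⬝ᵥ y ≤ ε → (Mᵀ *ᵥ y) ⬝ᵥ (Mᵀ *ᵥ y) ≤ ρ} (ρ / σ) := by
  have hS : (M * Mᵀ).PosSemidef := by simpa using posSemidef_self_mul_conjTranspose M
  have hquad (y : ι → ℝ) : (Mᵀ *ᵥ y) ⬝ᵥ (Mᵀ *ᵥ y) = y ⬝ᵥ ((M * Mᵀ) *ᵥ y) := by
    simpa using (dotProduct_mulVec_transpose_mul_self Mᵀ y).symm
  have hσpos : 0 < σ := by
    obtain ⟨μ, hμ, hμpos⟩ := hS.exists_pos_mem_spectrum <| by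
      rwa [Ne, ← conjTranspose_eq_transpose_of_trivial, self_mul_conjTranspose_eq_zero]
    exact hμpos.trans_le (hσ.2 hμ)
  refine ⟨⟨div_pos hρ hσpos, fun y hy => ?_⟩, fun ε ⟨_, hlevel⟩ => ?_⟩
  · calc (Mᵀ *ᵥ y) ⬝ᵥ (Mᵀ *ᵥ y) = y ⬝ᵥ ((M * Mᵀ) *ᵥ y) := hquad y
      _ ≤ σ * (y ⬝ᵥ y) := hS.1.dotProduct_mulVec_le hσ.2 y
      _ ≤ σ * (ρ / σ) := by gcongr
      _ = ρ := mul_div_cancel₀ ρ hσpos.ne'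
  · obtain ⟨v, hv0, hv⟩ := mem_spectrum_iff_exists_mulVec_eq_smul.1 hσ.1
    obtain ⟨y, hyy, hy⟩ : ∃ y, y ⬝ᵥ y = ε ∧ (M * Mᵀ) *ᵥ y = σ • y := by
      have hvv : 0 < v ⬝ᵥ v := (dotProduct_self_star_nonneg v).lt_of_ne' (by simpa using hv0)
      refine ⟨√(ε / (v ⬝ᵥ v)) • v, ?_, by rw [mulVec_smul, hv, smul_comm]⟩
      rw [smul_dotProduct, dotProduct_smul, smul_eq_mul, smul_eq_mul, ← mul_assoc,
        Real.mul_self_sqrt (by positivity), div_mul_cancel₀ ε hvv.ne']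
    have hσε := hlevel y hyy.le
    rw [hquad, hy, dotProduct_smul, hyy, smul_eq_mul] at hσε
    rwa [le_div_iff₀ hσpos, mul_comm]

theorem forall_level_imp_iff_of_mul_self_eq {P Q : Matrix ι ι ℝ} (hQt : Qᵀ = Q) (hQP : Q * Q = P)
    (hQ : IsUnit Q) (B : Matrix ι κ ℝ) (ε ρ : ℝ) :
    (∀ x, x ⬝ᵥ (P *ᵥ x) ≤ ε → (Bᵀ *ᵥ (P *ᵥ x)) ⬝ᵥ (Bᵀ *ᵥ (P *ᵥ x)) ≤ ρ) ↔
      ∀ y, y ⬝ᵥ y ≤ ε → ((Q * B)ᵀ *ᵥ y) ⬝ᵥ ((Q * B)ᵀ *ᵥ y) ≤ ρ := by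
  have hxPx (x : ι → ℝ) : x ⬝ᵥ (P *ᵥ x) = (Q *ᵥ x) ⬝ᵥ (Q *ᵥ x) := by
    rw [← hQP, ← dotProduct_mulVec_transpose_mul_self, hQt]
  have hBPx (x : ι → ℝ) : Bᵀ *ᵥ (P *ᵥ x) = (Q * B)ᵀ *ᵥ (Q *ᵥ x) := by
    rw [← hQP, transpose_mul, mulVec_mulVec, mulVec_mulVec, hQt, Matrix.mul_assoc]
  simp only [hxPx, hBPx]
  exact ((mulVec_surjective_iff_isUnit.2 hQ).forall
    (p := fun y => y ⬝ᵥ y ≤ ε → ((Q * B)ᵀ *ᵥ y) ⬝ᵥ ((Q * B)ᵀ *ᵥ y) ≤ ρ)).symm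

end Matrix

/-- Closed-form largest invariant ellipsoid level: `ε* = ρ/σ_max`, with `σ_max`
the largest eigenvalue of `P^{1/2} B Bᵀ P^{1/2}`, is the largest `ε > 0` such
that `xᵀPx ≤ ε` implies `‖BᵀPx‖² ≤ ρ`. -/
theorem stmt19 (n m : ℕ) (P : Matrix (Fin n) (Fin n) ℝ) (B : Matrix (Fin n) (Fin m) ℝ)
    (ρ : ℝ) (hρ : 0 < ρ) (hP : P.PosDef) (hB : B ≠ 0)
    (σmax : ℝ)
    (hσ : IsGreatest {μ : ℝ | ∃ x : Fin n → ℝ, x ≠ 0 ∧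
      (hP.posSemidef.sqrt * B * Bᵀ * hP.posSemidef.sqrt) *ᵥ x = μ • x} σmax) :
    IsGreatest {ε : ℝ | 0 < ε ∧ ∀ x : Fin n → ℝ, x ⬝ᵥ (P *ᵥ x) ≤ ε →
      (Bᵀ *ᵥ (P *ᵥ x)) ⬝ᵥ (Bᵀ *ᵥ (P *ᵥ x)) ≤ ρ} (ρ / σmax) := by
  set Q := hP.posSemidef.sqrt
  have hQt : Qᵀ = Q := hP.posSemidef.transpose_sqrt
  have hQunit : IsUnit Q := hP.isUnit_sqrt
  have hQB : Q * B ≠ 0 := by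
    intro hQB
    rw [← nonsing_inv_mul_cancel_left Q B ((isUnit_iff_isUnit_det Q).1 hQunit), hQB,
      Matrix.mul_zero] at hB
    exact hB rfl
  have hσS : IsGreatest (spectrum ℝ ((Q * B) * (Q * B)ᵀ)) σmax := by
    rwa [transpose_mul, hQt, ← Matrix.mul_assoc,
      Set.ext fun μ => mem_spectrum_iff_exists_mulVec_eq_smul]
  simp only [forall_level_imp_iff_of_mul_self_eq hQt hP.posSemidef.sqrt_mul_self hQunit]
  exact isGreatest_ball_level_of_isGreatest_spectrum (Q * B) hQB hρ hσS
end
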